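/- arXiv:1310.3866 — 3 statements merged into one kernel-verified Lean document; each statement's English description precedes it below -/
import Mathlib

section
/- Let $p \in [1,\infty)$, $\delta > 0$, and let $u : [0,\infty) \to \mathbb{R}$ be locally absolutely continuous. Then $\left(\int_0^\infty e^{-\delta t} |u(t) - u(0)|^p \, dt\right)^{1/p} \le \frac{p}{\delta} \left(\int_0^\infty e^{-\delta t} |\dot{u}(t)|^p \, dt\right)^{1/p}$. -/
/-!
Put `β = δ / p` and bound `|u t - u 0|` by `∫₀ᵗ |u'|`. Hölder's inequality against the weight
`e^{β s}` on `(0, t]` gives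
`e^{-δ t} (∫₀ᵗ |u'|)^p ≤ β^{1-p} e^{-β t} ∫₀ᵗ e^{(β - δ) s} |u'(s)|^p ds`.
Integrating over `t > 0` and swapping the order of integration, `∫ₛ^∞ e^{-β t} dt = e^{-β s} / β`
turns the right-hand side into `β^{-p} ∫₀^∞ e^{-δ s} |u'(s)|^p ds`; `β = δ / p` is the weight
exponent minimising this constant. Lower Lebesgue integrals make every step valid with no
integrability assumption.
-/

open MeasureTheory Set Real
open ENNReal (ofReal ofReal_ne_top)
open scoped ENNReal

namespace ENNReal

theorem ofReal_exp_add (x y : ℝ) : ofReal (exp (x + y)) = ofReal (exp x) * ofReal (exp y) := by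
  rw [exp_add, ofReal_mul (exp_pos x).le]

theorem ofReal_exp_rpow (x r : ℝ) : ofReal (exp x) ^ r = ofReal (exp (x * r)) := by
  rw [ofReal_rpow_of_pos (exp_pos x), exp_mul]

theorem ofReal_mul_abs_rpow {a : ℝ} (ha : 0 ≤ a) (x : ℝ) {p : ℝ} (hp : 0 ≤ p) :
    ofReal (a * |x| ^ p) = ofReal a * ‖x‖ₑ ^ p := by
  rw [ofReal_mul ha, Real.enorm_eq_ofReal_abs, ofReal_rpow_of_nonneg (abs_nonneg x) hp]

theorem lintegral_rpow_le_lintegral_rpow_sub_one_mul {α : Type*} [MeasurableSpace α]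
    (μ : Measure α) {p : ℝ} (hp : 1 ≤ p) {f φ : α → ℝ≥0∞} (hf : AEMeasurable f μ)
    (hφ : AEMeasurable φ μ) (hφ0 : ∀ x, φ x ≠ 0) (hφtop : ∀ x, φ x ≠ ∞) :
    (∫⁻ x, f x ∂μ) ^ p ≤ (∫⁻ x, φ x ∂μ) ^ (p - 1) * ∫⁻ x, f x ^ p * φ x ^ (1 - p) ∂μ := by
  rcases hp.eq_or_lt with rfl | hp1
  · simp
  have hp0 : 0 < p := zero_lt_one.trans hp1
  have hpq := Real.HolderConjugate.conjExponent hp1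
  set q := p.conjExponent
  have hsplit (x : α) : f x = f x * φ x ^ ((1 - p) / p) * φ x ^ ((p - 1) / p) := by
    rw [mul_assoc, ← rpow_add _ _ (hφ0 x) (hφtop x), ← add_div,
      show 1 - p + (p - 1) = 0 by ring, zero_div, rpow_zero, mul_one]
  have hF (x : α) : (f x * φ x ^ ((1 - p) / p)) ^ p = f x ^ p * φ x ^ (1 - p) := by
    rw [mul_rpow_of_nonneg _ _ hp0.le, ← rpow_mul, div_mul_cancel₀ _ hp0.ne']
  have hg (x : α) : (φ x ^ ((p - 1) / p)) ^ q = φ x := by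
    rw [← rpow_mul, div_mul_eq_mul_div, hpq.sub_one_mul_conj, div_self hp0.ne', rpow_one]
  have holder := lintegral_mul_le_Lp_mul_Lq μ hpq (hf.mul (hφ.pow_const ((1 - p) / p)))
    (hφ.pow_const ((p - 1) / p))
  simp only [Pi.mul_apply, hF, hg, ← hsplit] at holder
  calc (∫⁻ x, f x ∂μ) ^ p
      ≤ ((∫⁻ x, f x ^ p * φ x ^ (1 - p) ∂μ) ^ (1 / p) * (∫⁻ x, φ x ∂μ) ^ (1 / q)) ^ p :=
        rpow_le_rpow holder hp0.le
    _ = (∫⁻ x, φ x ∂μ) ^ (p - 1) * ∫⁻ x, f x ^ p * φ x ^ (1 - p) ∂μ := by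
        rw [mul_rpow_of_nonneg _ _ hp0.le, ← rpow_mul, ← rpow_mul, one_div_mul_cancel hp0.ne',
          rpow_one, mul_comm, show 1 / q * p = p - 1 by rw [hpq.conjugate_eq]; field_simp]

end ENNReal

theorem lintegral_ofReal_exp_mul_Iic {a : ℝ} (ha : 0 < a) (c : ℝ) :
    ∫⁻ x in Iic c, ofReal (exp (a * x)) = ofReal (exp (a * c) / a) := by
  rw [← ofReal_integral_eq_lintegral_ofReal (integrableOn_exp_mul_Iic ha c)
    (ae_of_all _ fun _ => (exp_pos _).le), integral_exp_mul_Iic ha]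

theorem lintegral_ofReal_exp_neg_mul_Ici {a : ℝ} (ha : 0 < a) (c : ℝ) :
    ∫⁻ x in Ici c, ofReal (exp (-a * x)) = ofReal (exp (-a * c) / a) := by
  rw [← Measure.restrict_congr_set Ioi_ae_eq_Ici,
    ← ofReal_integral_eq_lintegral_ofReal (integrableOn_exp_mul_Ioi (neg_neg_of_pos ha) c)
      (ae_of_all _ fun _ => (exp_pos _).le),
    integral_exp_mul_Ioi (neg_neg_of_pos ha), div_neg, neg_div, neg_neg]

theorem lintegral_mul_setLIntegral_Iic_comm (μ : Measure ℝ) [SFinite μ] {w H : ℝ → ℝ≥0∞}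
    (hw : Measurable w) (hH : AEMeasurable H μ) :
    ∫⁻ t, w t * ∫⁻ s in Iic t, H s ∂μ ∂μ = ∫⁻ s, H s * ∫⁻ t in Ici s, w t ∂μ ∂μ := by
  have hH' := hH.measurable_mk
  set H' := hH.mk H
  have hL (t : ℝ) : ∫⁻ s in Iic t, H s ∂μ = ∫⁻ s in Iic t, H' s ∂μ :=
    lintegral_congr_ae (ae_restrict_of_ae hH.ae_eq_mk)
  have hR : ∫⁻ s, H s * ∫⁻ t in Ici s, w t ∂μ ∂μ = ∫⁻ s, H' s * ∫⁻ t in Ici s, w t ∂μ ∂μ :=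
    lintegral_congr_ae (by filter_upwards [hH.ae_eq_mk] with s hs; rw [hs])
  set F := {q : ℝ × ℝ | q.2 ≤ q.1}.indicator fun q => w q.1 * H' q.2
  have hF : Measurable F := ((hw.comp measurable_fst).mul (hH'.comp measurable_snd)).indicator
    (measurableSet_le measurable_snd measurable_fst)
  have hF_left (t s : ℝ) : F (t, s) = w t * (Iic t).indicator H' s := by
    by_cases h : s ≤ t <;> simp [F, h]
  have hF_right (t s : ℝ) : F (t, s) = H' s * (Ici s).indicator w t := by
    by_cases h : s ≤ t <;> simp [F, h, mul_comm]
  calc ∫⁻ t, w t * ∫⁻ s in Iic t, H s ∂μ ∂μ = ∫⁻ t, ∫⁻ s, F (t, s) ∂μ ∂μ := by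
        simp_rw [hL, hF_left, lintegral_const_mul _ (hH'.indicator measurableSet_Iic),
          lintegral_indicator measurableSet_Iic]
    _ = ∫⁻ s, ∫⁻ t, F (t, s) ∂μ ∂μ := lintegral_lintegral_swap hF.aemeasurable
    _ = ∫⁻ s, H s * ∫⁻ t in Ici s, w t ∂μ ∂μ := by
        simp_rw [hR, hF_right, lintegral_const_mul _ (hw.indicator measurableSet_Ici),
          lintegral_indicator measurableSet_Ici]

theorem lintegral_Ioi_mul_setLIntegral_Ioc_comm (a : ℝ) {w H : ℝ → ℝ≥0∞}
    (hw : Measurable w) (hH : AEMeasurable H (volume.restrict (Ioi a))) :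
    ∫⁻ t in Ioi a, w t * ∫⁻ s in Ioc a t, H s = ∫⁻ s in Ioi a, H s * ∫⁻ t in Ici s, w t := by
  have h := lintegral_mul_setLIntegral_Iic_comm _ hw hH
  simp only [Measure.restrict_restrict measurableSet_Iic,
    Measure.restrict_restrict measurableSet_Ici, inter_comm (Iic _), Ioi_inter_Iic] at h
  rw [h]
  refine setLIntegral_congr_fun measurableSet_Ioi fun s hs => ?_
  rw [inter_eq_left.2 (Ici_subset_Ioi.2 hs)]

theorem ofReal_exp_mul_rpow_lintegral_Ioc_le {p δ : ℝ} (hp : 1 ≤ p) (hδ : 0 < δ)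
    {G : ℝ → ℝ≥0∞} {t : ℝ} (hG : AEMeasurable G (volume.restrict (Ioc 0 t))) :
    ofReal (exp (-δ * t)) * (∫⁻ s in Ioc 0 t, G s) ^ p ≤
      ofReal (p / δ) ^ (p - 1) * (ofReal (exp (-(δ / p) * t)) *
        ∫⁻ s in Ioc 0 t, G s ^ p * ofReal (exp (δ / p * s)) ^ (1 - p)) := by
  have hβ : 0 < δ / p := div_pos hδ (zero_lt_one.trans_le hp)
  have hweight : ∫⁻ s in Ioc 0 t, ofReal (exp (δ / p * s)) ≤
      ofReal (exp (δ / p * t)) * ofReal (p / δ) := by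
    refine (lintegral_mono_set Ioc_subset_Iic_self).trans_eq ?_
    rw [lintegral_ofReal_exp_mul_Iic hβ, div_eq_mul_inv, ENNReal.ofReal_mul (exp_pos _).le,
      inv_div]
  have holder := ENNReal.lintegral_rpow_le_lintegral_rpow_sub_one_mul _ hp hG
    (by fun_prop : Measurable fun s => ofReal (exp (δ / p * s))).aemeasurable
    (fun _ => (ENNReal.ofReal_pos.2 (exp_pos _)).ne') (fun _ => ofReal_ne_top)
  have hexp : ofReal (exp (-δ * t)) * ofReal (exp (δ / p * t * (p - 1))) =
      ofReal (exp (-(δ / p) * t)) := by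
    rw [← ENNReal.ofReal_exp_add]
    congr 2
    field_simp
    ring
  calc ofReal (exp (-δ * t)) * (∫⁻ s in Ioc 0 t, G s) ^ p
      ≤ ofReal (exp (-δ * t)) * ((∫⁻ s in Ioc 0 t, ofReal (exp (δ / p * s))) ^ (p - 1) *
          ∫⁻ s in Ioc 0 t, G s ^ p * ofReal (exp (δ / p * s)) ^ (1 - p)) := by
        gcongr
    _ ≤ ofReal (exp (-δ * t)) * ((ofReal (exp (δ / p * t)) * ofReal (p / δ)) ^ (p - 1) *
          ∫⁻ s in Ioc 0 t, G s ^ p * ofReal (exp (δ / p * s)) ^ (1 - p)) := by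
        gcongr
    _ = _ := by
        rw [ENNReal.mul_rpow_of_nonneg _ _ (sub_nonneg.2 hp), ENNReal.ofReal_exp_rpow, ← hexp]
        ring

theorem lintegral_exp_mul_rpow_lintegral_Ioc_le {p δ : ℝ} (hp : 1 ≤ p) (hδ : 0 < δ)
    {G : ℝ → ℝ≥0∞} (hG : AEMeasurable G (volume.restrict (Ioi 0))) :
    ∫⁻ t in Ioi 0, ofReal (exp (-δ * t)) * (∫⁻ s in Ioc 0 t, G s) ^ p ≤
      ofReal (p / δ) ^ p * ∫⁻ t in Ioi 0, ofReal (exp (-δ * t)) * G t ^ p := by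
  have hβ : 0 < δ / p := div_pos hδ (zero_lt_one.trans_le hp)
  set c := ofReal (p / δ)
  have hcp : c ^ (p - 1) * c = c ^ p := by
    simpa using (ENNReal.rpow_add_of_add_pos ofReal_ne_top (p - 1) 1 (by linarith)).symm
  set H := fun s => G s ^ p * ofReal (exp (δ / p * s)) ^ (1 - p)
  have hH : AEMeasurable H (volume.restrict (Ioi 0)) :=
    (hG.pow_const p).mul (by fun_prop : Measurable fun s => _).aemeasurable
  have hHs (s : ℝ) :
      H s * ofReal (exp (-(δ / p) * s) / (δ / p)) = c * (ofReal (exp (-δ * s)) * G s ^ p) := by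
    have hexp : ofReal (exp (δ / p * s * (1 - p))) * ofReal (exp (-(δ / p) * s)) =
        ofReal (exp (-δ * s)) := by
      rw [← ENNReal.ofReal_exp_add]
      congr 2
      field_simp
      ring
    simp only [H]
    rw [div_eq_mul_inv (exp _), ENNReal.ofReal_mul (exp_pos _).le, inv_div,
      ENNReal.ofReal_exp_rpow, ← hexp]
    ring
  calc ∫⁻ t in Ioi 0, ofReal (exp (-δ * t)) * (∫⁻ s in Ioc 0 t, G s) ^ p
      ≤ ∫⁻ t in Ioi 0, c ^ (p - 1) * (ofReal (exp (-(δ / p) * t)) * ∫⁻ s in Ioc 0 t, H s) :=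
        lintegral_mono fun t => ofReal_exp_mul_rpow_lintegral_Ioc_le hp hδ
          (hG.mono_measure (Measure.restrict_mono Ioc_subset_Ioi_self le_rfl))
    _ = c ^ (p - 1) * ∫⁻ s in Ioi 0, H s * ∫⁻ t in Ici s, ofReal (exp (-(δ / p) * t)) := by
        rw [lintegral_const_mul' _ _ (ENNReal.rpow_ne_top_of_nonneg (sub_nonneg.2 hp)
          ofReal_ne_top), lintegral_Ioi_mul_setLIntegral_Ioc_comm 0 (by fun_prop) hH]
    _ = c ^ (p - 1) * (c * ∫⁻ t in Ioi 0, ofReal (exp (-δ * t)) * G t ^ p) := by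
        rw [← lintegral_const_mul' _ _ ofReal_ne_top]
        congr 1
        refine lintegral_congr fun s => ?_
        rw [lintegral_ofReal_exp_neg_mul_Ici hβ, hHs]
    _ = c ^ p * ∫⁻ t in Ioi 0, ofReal (exp (-δ * t)) * G t ^ p := by
        rw [← mul_assoc, hcp]

theorem aestronglyMeasurable_restrict_Ioi_of_intervalIntegrable {E : Type*}
    [NormedAddCommGroup E] {f : ℝ → E} {a : ℝ}
    (hf : ∀ b, a ≤ b → IntervalIntegrable f volume a b) :
    AEStronglyMeasurable f (volume.restrict (Ioi a)) := by
  refine (aecover_Iic Filter.tendsto_id).aestronglyMeasurable fun b => ?_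
  rw [Measure.restrict_restrict measurableSet_Iic, inter_comm, Ioi_inter_Iic]
  exact ((hf (max a b) (le_max_left a b)).1.mono_set
    (Ioc_subset_Ioc_right (le_max_right a b))).aestronglyMeasurable

/-- Weighted Poincaré inequality: for `p ∈ [1,∞)`, `δ > 0` and a locally absolutely
continuous `u : [0,∞) → ℝ` (encoded via its a.e. derivative `u'` and the fundamental
theorem of calculus), the weighted `L^p` norm of `u - u 0` is bounded by `p/δ` times
the weighted `L^p` norm of `u'`.  Stated with lower Lebesgue integrals so that the
inequality also covers the case where the right-hand side is infinite. -/
theorem weighted_poincare (p δ : ℝ) (hp : 1 ≤ p) (hδ : 0 < δ)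
    (u u' : ℝ → ℝ)
    (hFTC : ∀ s t : ℝ, 0 ≤ s → s ≤ t →
      IntervalIntegrable u' volume s t ∧ u t - u s = ∫ r in s..t, u' r) :
    (∫⁻ t in Set.Ioi (0:ℝ), ENNReal.ofReal (Real.exp (-δ * t) * |u t - u 0| ^ p)) ^ (1/p)
      ≤ ENNReal.ofReal (p / δ) *
        (∫⁻ t in Set.Ioi (0:ℝ), ENNReal.ofReal (Real.exp (-δ * t) * |u' t| ^ p)) ^ (1/p) := by
  have hp0 : 0 < p := zero_lt_one.trans_le hp
  have hu' : AEStronglyMeasurable u' (volume.restrict (Ioi 0)) :=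
    aestronglyMeasurable_restrict_Ioi_of_intervalIntegrable fun b hb => (hFTC 0 b le_rfl hb).1
  have hincrement (t : ℝ) (ht : t ∈ Ioi 0) : ‖u t - u 0‖ₑ ≤ ∫⁻ s in Ioc 0 t, ‖u' s‖ₑ := by
    rw [(hFTC 0 t le_rfl ht.out.le).2, intervalIntegral.integral_of_le ht.out.le]
    exact enorm_integral_le_lintegral_enorm _
  simp only [ENNReal.ofReal_mul_abs_rpow (exp_pos _).le _ hp0.le]
  calc (∫⁻ t in Ioi 0, ofReal (exp (-δ * t)) * ‖u t - u 0‖ₑ ^ p) ^ (1 / p)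
      ≤ (∫⁻ t in Ioi 0, ofReal (exp (-δ * t)) * (∫⁻ s in Ioc 0 t, ‖u' s‖ₑ) ^ p) ^ (1 / p) := by
        gcongr ?_ ^ _
        exact setLIntegral_mono' measurableSet_Ioi fun t ht => by gcongr; exact hincrement t ht
    _ ≤ (ofReal (p / δ) ^ p * ∫⁻ t in Ioi 0, ofReal (exp (-δ * t)) * ‖u' t‖ₑ ^ p) ^ (1 / p) := by
        gcongr
        exact lintegral_exp_mul_rpow_lintegral_Ioc_le hp hδ hu'.enorm
    _ = ofReal (p / δ) * (∫⁻ t in Ioi 0, ofReal (exp (-δ * t)) * ‖u' t‖ₑ ^ p) ^ (1 / p) := by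
        rw [ENNReal.mul_rpow_of_nonneg _ _ (by positivity), ← ENNReal.rpow_mul,
          mul_one_div_cancel hp0.ne', ENNReal.rpow_one]
end

section
/- Let $p \in [1,\infty)$, $\delta > 0$, $T > 0$, and let $u : [0,T] \to \mathbb{R}$ be absolutely continuous with $u(0) = 0$. Then $\int_0^T e^{-\delta t} |u(t)|^p \, dt \le \frac{p}{\delta} \left(\int_0^T e^{-\delta t} |u(t)|^p \, dt\right)^{1-1/p} \left(\int_0^T e^{-\delta t} |\dot{u}(t)|^p \, dt\right)^{1/p}$ when $p > 1$. -/
/-!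
With `r = δ / p`, the function `e^{-rt} |u t|` is dominated on `(0, T]` by the convolution of the
kernel `k τ = e^{-rτ} 1_{τ ≥ 0}`, of total mass `1 / r = p / δ`, with
`g s = e^{-rs} |u' s| 1_{(0, T]} s`, because `e^{-rt} = e^{-r(t-s)} e^{-rs}`. Young's inequality
`‖k ∗ g‖_p ≤ ‖k‖_1 ‖g‖_p` (the Schur test: Hölder against the kernel, then Tonelli) turns this into
`A ≤ (p / δ)^p B` for the two weighted integrals, and `A = A^{1 - 1/p} A^{1/p}` gives the claim.
-/

open MeasureTheory Set Real
open scoped ENNReal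

theorem ofReal_integral_le_lintegral_ofReal {α : Type*} [MeasurableSpace α] {μ : Measure α}
    {f : α → ℝ} (hf : ∀ x, 0 ≤ f x) :
    ENNReal.ofReal (∫ x, f x ∂μ) ≤ ∫⁻ x, ENNReal.ofReal (f x) ∂μ := by
  calc ENNReal.ofReal (∫ x, f x ∂μ) ≤ ‖∫ x, f x ∂μ‖ₑ := by
        rw [Real.enorm_eq_ofReal_abs]
        exact ENNReal.ofReal_le_ofReal (le_abs_self _)
    _ ≤ ∫⁻ x, ‖f x‖ₑ ∂μ := enorm_integral_le_lintegral_enorm _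
    _ = ∫⁻ x, ENNReal.ofReal (f x) ∂μ := by
        simp only [Real.enorm_eq_ofReal_abs, abs_of_nonneg (hf _)]

section Schur

variable {α β : Type*} [MeasurableSpace α] [MeasurableSpace β] {p : ℝ}

theorem ENNReal.lintegral_mul_rpow_le {μ : Measure β} (hp : 1 < p) {K g : β → ℝ≥0∞}
    (hK : AEMeasurable K μ) (hg : AEMeasurable g μ) :
    (∫⁻ b, K b * g b ∂μ) ^ p ≤ (∫⁻ b, K b ∂μ) ^ (p - 1) * ∫⁻ b, K b * g b ^ p ∂μ := by
  have hpq := Real.HolderConjugate.conjExponent hp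
  set q := p.conjExponent
  have hsplit : ∀ b, K b * g b = K b ^ q⁻¹ * (K b ^ p⁻¹ * g b) := fun b => by
    rw [← mul_assoc, ← ENNReal.rpow_add_of_nonneg _ _ (inv_nonneg.2 hpq.symm.nonneg)
      (inv_nonneg.2 hpq.nonneg), hpq.symm.inv_add_inv_eq_one, ENNReal.rpow_one]
  have hholder := ENNReal.lintegral_mul_le_Lp_mul_Lq μ hpq.symm
    (hK.pow_const q⁻¹) ((hK.pow_const p⁻¹).mul hg)
  simp only [Pi.mul_apply, ← hsplit, ENNReal.rpow_inv_rpow hpq.symm.ne_zero,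
    ENNReal.mul_rpow_of_nonneg _ _ hpq.nonneg, ENNReal.rpow_inv_rpow hpq.ne_zero,
    one_div] at hholder
  calc (∫⁻ b, K b * g b ∂μ) ^ p
      ≤ ((∫⁻ b, K b ∂μ) ^ q⁻¹ * (∫⁻ b, K b * g b ^ p ∂μ) ^ p⁻¹) ^ p := by gcongr
    _ = (∫⁻ b, K b ∂μ) ^ (p - 1) * ∫⁻ b, K b * g b ^ p ∂μ := by
      rw [ENNReal.mul_rpow_of_nonneg _ _ hpq.nonneg, ← ENNReal.rpow_mul,
        ENNReal.rpow_inv_rpow hpq.ne_zero, ← div_eq_inv_mul, hpq.div_conj_eq_sub_one]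

theorem lintegral_rpow_lintegral_mul_le_of_schur {μ : Measure α} {ν : Measure β} [SFinite μ]
    [SFinite ν] (hp : 1 < p) {K : α → β → ℝ≥0∞} (hK : Measurable (Function.uncurry K))
    {g : β → ℝ≥0∞} (hg : AEMeasurable g ν) {C : ℝ≥0∞} (hrow : ∀ a, ∫⁻ b, K a b ∂ν ≤ C)
    (hcol : ∀ b, ∫⁻ a, K a b ∂μ ≤ C) :
    ∫⁻ a, (∫⁻ b, K a b * g b ∂ν) ^ p ∂μ ≤ C ^ p * ∫⁻ b, g b ^ p ∂ν := by
  have hKg : AEMeasurable (Function.uncurry fun a b => K a b * g b ^ p) (μ.prod ν) :=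
    hK.aemeasurable.mul (hg.pow_const p).comp_snd
  calc ∫⁻ a, (∫⁻ b, K a b * g b ∂ν) ^ p ∂μ
      ≤ ∫⁻ a, C ^ (p - 1) * ∫⁻ b, K a b * g b ^ p ∂ν ∂μ := by
        refine lintegral_mono fun a => (ENNReal.lintegral_mul_rpow_le hp
          (hK.of_uncurry_left.aemeasurable) hg).trans ?_
        gcongr
        exact hrow a
    _ = C ^ (p - 1) * ∫⁻ b, (∫⁻ a, K a b ∂μ) * g b ^ p ∂ν := by
        have hinner : AEMeasurable (fun a => ∫⁻ b, K a b * g b ^ p ∂ν) μ :=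
          hKg.lintegral_prod_right'
        rw [lintegral_const_mul'' _ hinner, lintegral_lintegral_swap hKg]
        congr 1
        refine lintegral_congr fun b => lintegral_mul_const'' _ ?_
        exact hK.of_uncurry_right.aemeasurable
    _ ≤ C ^ (p - 1) * (C * ∫⁻ b, g b ^ p ∂ν) := by
        rw [← lintegral_const_mul'' _ (hg.pow_const p)]
        gcongr with b
        exact hcol b
    _ = C ^ p * ∫⁻ b, g b ^ p ∂ν := by
        rw [← mul_assoc]
        congr 1
        conv_rhs => rw [← sub_add_cancel p 1, ENNReal.rpow_add_of_nonneg _ _ (by linarith)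
          zero_le_one, ENNReal.rpow_one]

theorem lintegral_rpow_lintegral_convolution_le {G : Type*} [AddGroup G] [MeasurableSpace G]
    [MeasurableAdd₂ G] [MeasurableNeg G] {μ : Measure G} [SFinite μ] [μ.IsAddLeftInvariant]
    [μ.IsAddRightInvariant] [μ.IsNegInvariant] (hp : 1 < p) {k g : G → ℝ≥0∞}
    (hk : Measurable k) (hg : AEMeasurable g μ) :
    ∫⁻ x, (∫⁻ y, k (x - y) * g y ∂μ) ^ p ∂μ ≤ (∫⁻ x, k x ∂μ) ^ p * ∫⁻ y, g y ^ p ∂μ :=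
  lintegral_rpow_lintegral_mul_le_of_schur (K := fun x y => k (x - y)) hp
    (hk.comp measurable_sub) hg
    (fun x => (lintegral_sub_left_eq_self k x).le) (fun y => (lintegral_sub_right_eq_self k y).le)

end Schur

theorem le_mul_rpow_one_sub_one_div_mul_rpow_one_div {A B c p : ℝ} (hp : 0 < p) (hA : 0 ≤ A)
    (hB : 0 ≤ B) (hc : 0 ≤ c) (h : A ≤ c ^ p * B) : A ≤ c * A ^ (1 - 1 / p) * B ^ (1 / p) := by
  calc A = A ^ (1 - 1 / p) * A ^ (1 / p) := by
        rw [← rpow_add' hA (by simp), sub_add_cancel, rpow_one]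
    _ ≤ A ^ (1 - 1 / p) * (c ^ p * B) ^ (1 / p) := by gcongr
    _ = c * A ^ (1 - 1 / p) * B ^ (1 / p) := by
        rw [mul_rpow (by positivity) hB, ← rpow_mul hc, mul_one_div_cancel hp.ne', rpow_one]
        ring

noncomputable def expKernel (r : ℝ) : ℝ → ℝ≥0∞ :=
  (Ici 0).indicator fun τ => ENNReal.ofReal (exp (-r * τ))

theorem measurable_expKernel (r : ℝ) : Measurable (expKernel r) :=
  (ENNReal.measurable_ofReal.comp (by fun_prop)).indicator measurableSet_Ici

theorem lintegral_expKernel {r : ℝ} (hr : 0 < r) : ∫⁻ τ, expKernel r τ = ENNReal.ofReal r⁻¹ := by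
  rw [expKernel, lintegral_indicator measurableSet_Ici, ← Measure.restrict_congr_set Ioi_ae_eq_Ici,
    ← ofReal_integral_eq_lintegral_ofReal (integrableOn_exp_mul_Ioi (by linarith) 0)
      (Filter.Eventually.of_forall fun _ => (exp_pos _).le),
    integral_exp_mul_Ioi (by linarith) 0]
  simp [neg_div, div_neg]

noncomputable def expWeightedAbs (r T : ℝ) (v : ℝ → ℝ) : ℝ → ℝ≥0∞ :=
  (Ioc 0 T).indicator fun s => ENNReal.ofReal (exp (-r * s) * |v s|)

theorem ofReal_exp_mul_abs_rpow {p : ℝ} (hp : 0 < p) (δ t x : ℝ) :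
    ENNReal.ofReal (exp (-δ * t) * |x| ^ p) = ENNReal.ofReal (exp (-(δ / p) * t) * |x|) ^ p := by
  rw [ENNReal.ofReal_rpow_of_nonneg (by positivity) hp.le, mul_rpow (exp_pos _).le (abs_nonneg x),
    ← exp_mul]
  congr 3
  field_simp

theorem ofReal_exp_mul_abs_le_lintegral_expKernel {u u' : ℝ → ℝ} {r t T : ℝ} (ht : 0 ≤ t)
    (htT : t ≤ T) (hu : u t = ∫ s in 0..t, u' s) :
    ENNReal.ofReal (exp (-r * t) * |u t|) ≤
      ∫⁻ s, expKernel r (t - s) * expWeightedAbs r T u' s := by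
  have hsplit : ∀ s ∈ Ioc 0 t, ENNReal.ofReal (exp (-r * t)) * ‖u' s‖ₑ =
      expKernel r (t - s) * ENNReal.ofReal (exp (-r * s) * |u' s|) := fun s hs => by
    rw [expKernel, indicator_of_mem (mem_Ici.2 (sub_nonneg.2 hs.2)), Real.enorm_eq_ofReal_abs,
      ← ENNReal.ofReal_mul (exp_pos _).le, ← ENNReal.ofReal_mul (exp_pos _).le, ← mul_assoc,
      ← exp_add]
    ring_nf
  calc ENNReal.ofReal (exp (-r * t) * |u t|)
      = ENNReal.ofReal (exp (-r * t)) * ‖∫ s in Ioc 0 t, u' s‖ₑ := by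
        rw [hu, intervalIntegral.integral_of_le ht, ENNReal.ofReal_mul (exp_pos _).le,
          Real.enorm_eq_ofReal_abs]
    _ ≤ ENNReal.ofReal (exp (-r * t)) * ∫⁻ s in Ioc 0 t, ‖u' s‖ₑ := by
        gcongr
        exact enorm_integral_le_lintegral_enorm _
    _ = ∫⁻ s in Ioc 0 t, expKernel r (t - s) * ENNReal.ofReal (exp (-r * s) * |u' s|) := by
        rw [← lintegral_const_mul' _ _ ENNReal.ofReal_ne_top]
        exact setLIntegral_congr_fun measurableSet_Ioc hsplit
    _ ≤ ∫⁻ s in Ioc 0 T, expKernel r (t - s) * ENNReal.ofReal (exp (-r * s) * |u' s|) :=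
        lintegral_mono_set (Ioc_subset_Ioc_right htT)
    _ = _ := by
        rw [← lintegral_indicator measurableSet_Ioc]
        simp only [expWeightedAbs, indicator_mul_right]

theorem ofReal_integral_exp_mul_abs_rpow_le {p δ T : ℝ} (hp : 0 < p) (hT : 0 ≤ T) {u u' : ℝ → ℝ}
    (hu : ∀ t ∈ Ioc 0 T, u t = ∫ s in 0..t, u' s) :
    ENNReal.ofReal (∫ t in 0..T, exp (-δ * t) * |u t| ^ p) ≤
      ∫⁻ t, (∫⁻ s, expKernel (δ / p) (t - s) * expWeightedAbs (δ / p) T u' s) ^ p := by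
  rw [intervalIntegral.integral_of_le hT]
  calc _ ≤ ∫⁻ t in Ioc 0 T, ENNReal.ofReal (exp (-δ * t) * |u t| ^ p) :=
        ofReal_integral_le_lintegral_ofReal fun _ => by positivity
    _ ≤ ∫⁻ t in Ioc 0 T,
          (∫⁻ s, expKernel (δ / p) (t - s) * expWeightedAbs (δ / p) T u' s) ^ p := by
        refine setLIntegral_mono' measurableSet_Ioc fun t ht => ?_
        rw [ofReal_exp_mul_abs_rpow hp]
        gcongr
        exact ofReal_exp_mul_abs_le_lintegral_expKernel ht.1.le ht.2 (hu t ht)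
    _ ≤ _ := setLIntegral_le_lintegral _ _

theorem lintegral_expWeightedAbs_rpow {p δ T : ℝ} (hp : 0 < p) (hT : 0 ≤ T) {v : ℝ → ℝ}
    (hv : IntegrableOn (fun t => exp (-δ * t) * |v t| ^ p) (Ioc 0 T)) :
    ∫⁻ s, expWeightedAbs (δ / p) T v s ^ p =
      ENNReal.ofReal (∫ t in 0..T, exp (-δ * t) * |v t| ^ p) := by
  rw [intervalIntegral.integral_of_le hT,
    ofReal_integral_eq_lintegral_ofReal hv (ae_of_all _ fun _ => by positivity),
    ← lintegral_indicator measurableSet_Ioc]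
  congr 1
  funext s
  by_cases hs : s ∈ Ioc 0 T
  · simp only [expWeightedAbs, indicator_of_mem hs, ofReal_exp_mul_abs_rpow hp]
  · simp [expWeightedAbs, hs, hp]

theorem aemeasurable_expWeightedAbs {r T : ℝ} {v : ℝ → ℝ}
    (hv : IntervalIntegrable v volume 0 T) :
    AEMeasurable (expWeightedAbs r T v) := by
  refine (aemeasurable_indicator_iff measurableSet_Ioc).2
    (ENNReal.measurable_ofReal.comp_aemeasurable ?_)
  exact (by fun_prop : Measurable fun s => exp (-r * s)).aemeasurable.mul
    hv.1.aestronglyMeasurable.aemeasurable.abs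

theorem weighted_poincare_finite_general (p δ T : ℝ) (hp : 1 < p) (hδ : 0 < δ) (hT : 0 < T)
    (u u' : ℝ → ℝ) (h0 : u 0 = 0)
    (hFTC : ∀ s t : ℝ, 0 ≤ s → s ≤ t → t ≤ T →
      IntervalIntegrable u' volume s t ∧ u t - u s = ∫ r in s..t, u' r)
    (hint : IntegrableOn (fun t => Real.exp (-δ * t) * |u' t| ^ p) (Set.Icc 0 T)) :
    (∫ t in (0:ℝ)..T, Real.exp (-δ * t) * |u t| ^ p)
      ≤ (p / δ) * (∫ t in (0:ℝ)..T, Real.exp (-δ * t) * |u t| ^ p) ^ (1 - 1/p)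
          * (∫ t in (0:ℝ)..T, Real.exp (-δ * t) * |u' t| ^ p) ^ (1/p) := by
  have hp0 : 0 < p := by linarith
  have hpδ : 0 < p / δ := div_pos hp0 hδ
  have hB : 0 ≤ ∫ t in (0:ℝ)..T, exp (-δ * t) * |u' t| ^ p :=
    intervalIntegral.integral_nonneg hT.le fun _ _ => by positivity
  have hu : ∀ t ∈ Ioc 0 T, u t = ∫ s in 0..t, u' s := fun t ht => by
    rw [← (hFTC 0 t le_rfl ht.1.le ht.2).2, h0, sub_zero]
  have hAB : ∫ t in (0:ℝ)..T, exp (-δ * t) * |u t| ^ p ≤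
      (p / δ) ^ p * ∫ t in (0:ℝ)..T, exp (-δ * t) * |u' t| ^ p := by
    have hconv := (ofReal_integral_exp_mul_abs_rpow_le (δ := δ) hp0 hT.le hu).trans
      (lintegral_rpow_lintegral_convolution_le hp (measurable_expKernel _)
        (aemeasurable_expWeightedAbs (hFTC 0 T le_rfl hT.le le_rfl).1))
    rwa [lintegral_expKernel (div_pos hδ hp0), lintegral_expWeightedAbs_rpow hp0 hT.le
      (hint.mono_set Ioc_subset_Icc_self), inv_div, ENNReal.ofReal_rpow_of_nonneg hpδ.le hp0.le,
      ← ENNReal.ofReal_mul (by positivity), ENNReal.ofReal_le_ofReal_iff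
        (mul_nonneg (by positivity) hB)] at hconv
  exact le_mul_rpow_one_sub_one_div_mul_rpow_one_div hp0
    (intervalIntegral.integral_nonneg hT.le fun _ _ => by positivity) hB hpδ.le hAB

/-- Finite-horizon weighted estimate: for `p > 1`, `δ > 0`, `T > 0` and an absolutely
continuous `u : [0,T] → ℝ` with `u 0 = 0` (encoded via its a.e. derivative `u'` and the
fundamental theorem of calculus on `[0,T]`),
`∫_0^T e^{-δt}|u|^p ≤ (p/δ) (∫_0^T e^{-δt}|u|^p)^{1-1/p} (∫_0^T e^{-δt}|u'|^p)^{1/p}`. -/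
theorem weighted_poincare_finite (p δ T : ℝ) (hp : 1 < p) (hδ : 0 < δ) (hT : 0 < T)
    (u u' : ℝ → ℝ) (h0 : u 0 = 0)
    (hcont : ContinuousOn u (Set.Icc 0 T))
    (hFTC : ∀ s t : ℝ, 0 ≤ s → s ≤ t → t ≤ T →
      IntervalIntegrable u' volume s t ∧ u t - u s = ∫ r in s..t, u' r)
    (hint : IntegrableOn (fun t => Real.exp (-δ * t) * |u' t| ^ p) (Set.Icc 0 T)) :
    (∫ t in (0:ℝ)..T, Real.exp (-δ * t) * |u t| ^ p)
      ≤ (p / δ) * (∫ t in (0:ℝ)..T, Real.exp (-δ * t) * |u t| ^ p) ^ (1 - 1/p)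
          * (∫ t in (0:ℝ)..T, Real.exp (-δ * t) * |u' t| ^ p) ^ (1/p) :=
  weighted_poincare_finite_general p δ T hp hδ hT u u' h0 hFTC hint
end

section
/- Let $(X,d)$ be a metric space, $p \in (1,\infty)$, $\delta > 0$. Suppose $\mathcal{V} : X \to \mathbb{R}$ satisfies $\mathcal{V}(x) \le \alpha\, d(x,\varrho)^p + \beta$ for all $x \in X$, with $\alpha \ge 0$, $\beta \in \mathbb{R}$, $\varrho \in X$ fixed, and $p(2p/\delta)^p \alpha < 1$. Let $\sigma : [0,\infty) \to X$ be a curve with measurable speed $g$ (i.e., $d(\sigma(s),\sigma(t)) \le \int_s^t g$ for $s \le t$) and $\int_0^\infty e^{-\delta t} g(t)^p dt < \infty$. Then $\int_0^\infty e^{-\delta t}\left(\frac{1}{p}g(t)^p - \mathcal{V}(\sigma(t))\right)dt \ge -\frac{1}{\delta}\left(\beta + 2^p\alpha\, d(\sigma(0),\varrho)^p\right)$. -/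
open MeasureTheory Set Real
open scoped ENNReal

/-!
Put `F t = ∫₀ᵗ g`, so that `d(σ t, σ 0) ≤ F t`. The growth bound on `𝒱` and the triangle
inequality give `𝒱 (σ t) ≤ 2^p α F(t)^p + β + 2^p α d(σ 0, ϱ)^p`, and the discounted mass of
`F^p` is controlled by the kinetic term through the weighted Hardy–Poincaré inequality
`∫ e^{-δt} F^p ≤ (p/δ)^p ∫ e^{-δt} g^p`. The latter follows from Hölder's inequality on `(0, t]`
with the weight `e^{δs/p}` and Tonelli's theorem, without any a priori finiteness. The
smallness condition on `α` then lets the kinetic term absorb the potential.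
-/

theorem lintegral_rpow_le_mul_lintegral_weight_rpow {α : Type*} [MeasurableSpace α]
    (μ : Measure α) {p : ℝ} (hp : 1 < p) {f w : α → ℝ≥0∞} (hf : AEMeasurable f μ)
    (hw : AEMeasurable w μ) (hw0 : ∀ x, w x ≠ 0) (hwtop : ∀ x, w x ≠ ∞) :
    (∫⁻ x, f x ∂μ) ^ p ≤ (∫⁻ x, w x ^ (1 - p) * f x ^ p ∂μ) * (∫⁻ x, w x ∂μ) ^ (p - 1) := by
  have hpq : p.HolderConjugate p.conjExponent := .conjExponent hp
  set q := p.conjExponent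
  have hp0 : 0 < p := hpq.pos
  have hpq' : p / q = p - 1 := by
    rw [div_eq_iff hpq.symm.ne_zero, hpq.sub_one_mul_conj]
  have hsplit (x : α) : w x ^ (-q⁻¹) * f x * w x ^ q⁻¹ = f x := by
    rw [mul_right_comm, ← ENNReal.rpow_add _ _ (hw0 x) (hwtop x), neg_add_cancel,
      ENNReal.rpow_zero, one_mul]
  have hfirst (x : α) : (w x ^ (-q⁻¹) * f x) ^ p = w x ^ (1 - p) * f x ^ p := by
    rw [ENNReal.mul_rpow_of_nonneg _ _ hp0.le, ← ENNReal.rpow_mul, neg_mul, inv_mul_eq_div, hpq',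
      neg_sub]
  have hsecond (x : α) : (w x ^ q⁻¹) ^ q = w x := by
    rw [← ENNReal.rpow_mul, inv_mul_cancel₀ hpq.symm.ne_zero, ENNReal.rpow_one]
  have hholder := ENNReal.lintegral_mul_le_Lp_mul_Lq μ hpq
    (f := fun x => w x ^ (-q⁻¹) * f x) (g := fun x => w x ^ q⁻¹)
    ((hw.pow aemeasurable_const).mul hf) (hw.pow aemeasurable_const)
  simp only [Pi.mul_apply, hsplit, hfirst, hsecond] at hholder
  calc (∫⁻ x, f x ∂μ) ^ p
      ≤ ((∫⁻ x, w x ^ (1 - p) * f x ^ p ∂μ) ^ (1 / p) * (∫⁻ x, w x ∂μ) ^ (1 / q)) ^ p :=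
        ENNReal.rpow_le_rpow hholder hp0.le
    _ = (∫⁻ x, w x ^ (1 - p) * f x ^ p ∂μ) * (∫⁻ x, w x ∂μ) ^ (p - 1) := by
        rw [ENNReal.mul_rpow_of_nonneg _ _ hp0.le, ← ENNReal.rpow_mul, ← ENNReal.rpow_mul,
          one_div_mul_cancel hp0.ne', ENNReal.rpow_one, one_div_mul_eq_div, hpq']

theorem lintegral_Ioi_mul_lintegral_Ioc {μ : Measure ℝ} [SFinite μ] {k W : ℝ → ℝ≥0∞}
    (hk : Measurable k) (hW : Measurable W) (a : ℝ) :
    ∫⁻ t in Ioi a, k t * ∫⁻ s in Ioc a t, W s ∂μ ∂μ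
      = ∫⁻ s in Ioi a, (∫⁻ t in Ici s, k t ∂μ) * W s ∂μ := by
  set K : ℝ → ℝ → ℝ≥0∞ := fun t s => if s ≤ t then k t * W s else 0
  have hK : Measurable (Function.uncurry K) :=
    Measurable.ite (measurableSet_le measurable_snd measurable_fst)
      ((hk.comp measurable_fst).mul (hW.comp measurable_snd)) measurable_const
  calc ∫⁻ t in Ioi a, k t * ∫⁻ s in Ioc a t, W s ∂μ ∂μ
      = ∫⁻ t in Ioi a, ∫⁻ s in Ioi a, K t s ∂μ ∂μ := by
        refine setLIntegral_congr_fun measurableSet_Ioi fun t _ => ?_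
        rw [← Iic_inter_Ioi, ← Measure.restrict_restrict measurableSet_Iic,
          ← lintegral_indicator measurableSet_Iic,
          ← lintegral_const_mul _ (hW.indicator measurableSet_Iic)]
        congr 1 with s
        simp [K, indicator_apply]
    _ = ∫⁻ s in Ioi a, ∫⁻ t in Ioi a, K t s ∂μ ∂μ := lintegral_lintegral_swap hK.aemeasurable
    _ = ∫⁻ s in Ioi a, (∫⁻ t in Ici s, k t ∂μ) * W s ∂μ := by
        refine setLIntegral_congr_fun measurableSet_Ioi fun s hs => ?_
        rw [← inter_eq_left.2 (Ici_subset_Ioi.2 hs), ← Measure.restrict_restrict measurableSet_Ici,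
          ← lintegral_indicator measurableSet_Ici,
          ← lintegral_mul_const _ (hk.indicator measurableSet_Ici)]
        congr 1 with t
        simp [K, indicator_apply]

theorem lintegral_Ioc_ofReal_exp_le {r : ℝ} (hr : 0 < r) (a t : ℝ) :
    ∫⁻ s in Ioc a t, ENNReal.ofReal (exp (r * s)) ≤ ENNReal.ofReal (exp (r * t) / r) := by
  refine (lintegral_mono_set Ioc_subset_Iic_self).trans_eq ?_
  rw [← ofReal_integral_eq_lintegral_ofReal (integrableOn_exp_mul_Iic hr t)
    (.of_forall fun _ => (exp_pos _).le), integral_exp_mul_Iic hr]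

theorem lintegral_Ici_ofReal_exp_neg {r : ℝ} (hr : 0 < r) (s : ℝ) :
    ∫⁻ t in Ici s, ENNReal.ofReal (exp (-r * t)) = ENNReal.ofReal (exp (-r * s) / r) := by
  rw [← setLIntegral_congr Ioi_ae_eq_Ici, ← ofReal_integral_eq_lintegral_ofReal
    (integrableOn_exp_mul_Ioi (neg_lt_zero.2 hr) s) (.of_forall fun _ => (exp_pos _).le),
    integral_exp_mul_Ioi (neg_lt_zero.2 hr), neg_div_neg_eq]

theorem ofReal_exp_mul_lintegral_Ioc_rpow_le {G : ℝ → ℝ≥0∞} (hG : Measurable G) {p r : ℝ}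
    (hp : 1 < p) (hr : 0 < r) (t : ℝ) :
    ENNReal.ofReal (exp (-(p * r) * t)) * (∫⁻ s in Ioc 0 t, G s) ^ p
      ≤ ENNReal.ofReal (r ^ (1 - p)) * (ENNReal.ofReal (exp (-r * t)) *
          ∫⁻ s in Ioc 0 t, ENNReal.ofReal (exp (r * s)) ^ (1 - p) * G s ^ p) := by
  have hweight : ENNReal.ofReal (exp (-(p * r) * t)) * ENNReal.ofReal (exp (r * t) / r) ^ (p - 1)
      = ENNReal.ofReal (r ^ (1 - p)) * ENNReal.ofReal (exp (-r * t)) := by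
    rw [ENNReal.ofReal_rpow_of_nonneg (by positivity) (by linarith), ← ENNReal.ofReal_mul
      (exp_pos _).le, ← ENNReal.ofReal_mul (by positivity), div_rpow (exp_pos _).le hr.le,
      ← exp_mul, show 1 - p = -(p - 1) by ring, rpow_neg hr.le]
    congr 1
    field_simp
    rw [← exp_add]
    congr 1
    ring
  calc ENNReal.ofReal (exp (-(p * r) * t)) * (∫⁻ s in Ioc 0 t, G s) ^ p
      ≤ ENNReal.ofReal (exp (-(p * r) * t)) *
          ((∫⁻ s in Ioc 0 t, ENNReal.ofReal (exp (r * s)) ^ (1 - p) * G s ^ p)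
            * ENNReal.ofReal (exp (r * t) / r) ^ (p - 1)) := by
        gcongr
        refine (lintegral_rpow_le_mul_lintegral_weight_rpow _ hp hG.aemeasurable
          (w := fun s => ENNReal.ofReal (exp (r * s))) (by fun_prop)
          (fun _ => (ENNReal.ofReal_pos.2 (exp_pos _)).ne')
          (fun _ => ENNReal.ofReal_ne_top)).trans ?_
        gcongr _ * ?_ ^ _
        exact lintegral_Ioc_ofReal_exp_le hr 0 t
    _ = ENNReal.ofReal (r ^ (1 - p)) * (ENNReal.ofReal (exp (-r * t)) *
          ∫⁻ s in Ioc 0 t, ENNReal.ofReal (exp (r * s)) ^ (1 - p) * G s ^ p) := by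
        rw [mul_left_comm, hweight]; ring

theorem lintegral_exp_mul_lintegral_Ioc_rpow_le {G : ℝ → ℝ≥0∞} (hG : Measurable G) {p δ : ℝ}
    (hp : 1 < p) (hδ : 0 < δ) :
    ∫⁻ t in Ioi 0, ENNReal.ofReal (exp (-δ * t)) * (∫⁻ s in Ioc 0 t, G s) ^ p
      ≤ ENNReal.ofReal ((p / δ) ^ p) * ∫⁻ t in Ioi 0, ENNReal.ofReal (exp (-δ * t)) * G t ^ p := by
  have hp0 : 0 < p := by linarith
  set r := δ / p
  have hr : 0 < r := div_pos hδ hp0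
  have hδr : δ = p * r := by simp only [r]; field_simp
  set W : ℝ → ℝ≥0∞ := fun s => ENNReal.ofReal (exp (r * s)) ^ (1 - p) * G s ^ p
  have hW : Measurable W := by fun_prop
  have hpointwise (t : ℝ) : ENNReal.ofReal (exp (-δ * t)) * (∫⁻ s in Ioc 0 t, G s) ^ p
      ≤ ENNReal.ofReal (r ^ (1 - p)) * (ENNReal.ofReal (exp (-r * t)) * ∫⁻ s in Ioc 0 t, W s) := by
    simpa only [← hδr] using ofReal_exp_mul_lintegral_Ioc_rpow_le hG hp hr t
  have hW_exp (s : ℝ) : ENNReal.ofReal (exp (-r * s) / r) * W s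
      = ENNReal.ofReal r⁻¹ * (ENNReal.ofReal (exp (-δ * s)) * G s ^ p) := by
    simp only [W]
    rw [ENNReal.ofReal_rpow_of_pos (exp_pos _), ← exp_mul, div_eq_inv_mul,
      ENNReal.ofReal_mul (by positivity), mul_assoc, ← mul_assoc (ENNReal.ofReal (exp _)),
      ← ENNReal.ofReal_mul (exp_pos _).le, ← exp_add, hδr]
    congr 4
    ring
  have hconst : ENNReal.ofReal (r ^ (1 - p)) * ENNReal.ofReal r⁻¹
      = ENNReal.ofReal ((p / δ) ^ p) := by
    rw [← ENNReal.ofReal_mul (by positivity), ← rpow_neg_one, ← rpow_add hr,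
      show 1 - p + -1 = -p by ring, rpow_neg hr.le, ← inv_rpow hr.le, inv_div]
  calc ∫⁻ t in Ioi 0, ENNReal.ofReal (exp (-δ * t)) * (∫⁻ s in Ioc 0 t, G s) ^ p
      ≤ ∫⁻ t in Ioi 0, ENNReal.ofReal (r ^ (1 - p)) *
          (ENNReal.ofReal (exp (-r * t)) * ∫⁻ s in Ioc 0 t, W s) := lintegral_mono hpointwise
    _ = ENNReal.ofReal (r ^ (1 - p)) *
          ∫⁻ s in Ioi 0, ENNReal.ofReal (exp (-r * s) / r) * W s := by
        rw [lintegral_const_mul' _ _ ENNReal.ofReal_ne_top,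
          lintegral_Ioi_mul_lintegral_Ioc (by fun_prop) hW]
        simp only [lintegral_Ici_ofReal_exp_neg hr]
    _ = ENNReal.ofReal ((p / δ) ^ p) * ∫⁻ t in Ioi 0, ENNReal.ofReal (exp (-δ * t)) * G t ^ p := by
        simp only [hW_exp]
        rw [lintegral_const_mul' _ _ ENNReal.ofReal_ne_top, ← mul_assoc, hconst]

theorem measurable_setIntegral_Ioc {g : ℝ → ℝ} (hg : Measurable g) (a : ℝ) :
    Measurable fun t => ∫ s in Ioc a t, g s := by
  simp_rw [← integral_indicator measurableSet_Ioc]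
  refine StronglyMeasurable.measurable (StronglyMeasurable.integral_prod_right
    (f := fun t s => (Ioc a t).indicator g s) ?_)
  refine Measurable.stronglyMeasurable (Measurable.ite ?_ (hg.comp measurable_snd) measurable_const)
  exact (measurableSet_lt measurable_const measurable_snd).inter
    (measurableSet_le measurable_snd measurable_fst)

section Poincare

variable {g : ℝ → ℝ} {p δ : ℝ}

theorem setIntegral_Ioc_nonneg (hg0 : ∀ t, 0 ≤ g t) (a t : ℝ) : 0 ≤ ∫ s in Ioc a t, g s :=
  setIntegral_nonneg measurableSet_Ioc fun s _ => hg0 s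

theorem measurable_exp_mul_setIntegral_Ioc_rpow (hgm : Measurable g) :
    Measurable fun t => exp (-δ * t) * (∫ s in Ioc 0 t, g s) ^ p :=
  (by fun_prop : Measurable fun t => exp (-δ * t)).mul
    ((measurable_setIntegral_Ioc hgm 0).pow_const p)

theorem exp_mul_setIntegral_Ioc_rpow_nonneg (hg0 : ∀ t, 0 ≤ g t) (t : ℝ) :
    0 ≤ exp (-δ * t) * (∫ s in Ioc 0 t, g s) ^ p :=
  mul_nonneg (exp_pos _).le (rpow_nonneg (setIntegral_Ioc_nonneg hg0 0 t) p)

theorem lintegral_exp_mul_setIntegral_Ioc_rpow_le (hp : 1 < p) (hδ : 0 < δ) (hgm : Measurable g)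
    (hg0 : ∀ t, 0 ≤ g t) :
    ∫⁻ t in Ioi 0, ENNReal.ofReal (exp (-δ * t) * (∫ s in Ioc 0 t, g s) ^ p)
      ≤ ENNReal.ofReal ((p / δ) ^ p) * ∫⁻ t in Ioi 0, ENNReal.ofReal (exp (-δ * t) * g t ^ p) := by
  have hp0 : 0 ≤ p := by linarith
  have hprimitive (t : ℝ) :
      ENNReal.ofReal (∫ s in Ioc 0 t, g s) ≤ ∫⁻ s in Ioc 0 t, ENNReal.ofReal (g s) := by
    rw [integral_eq_lintegral_of_nonneg_ae (.of_forall hg0) hgm.aestronglyMeasurable]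
    exact ENNReal.ofReal_toReal_le
  calc ∫⁻ t in Ioi 0, ENNReal.ofReal (exp (-δ * t) * (∫ s in Ioc 0 t, g s) ^ p)
      ≤ ∫⁻ t in Ioi 0, ENNReal.ofReal (exp (-δ * t)) *
          (∫⁻ s in Ioc 0 t, ENNReal.ofReal (g s)) ^ p := by
        refine lintegral_mono fun t => ?_
        rw [ENNReal.ofReal_mul (exp_pos _).le,
          ← ENNReal.ofReal_rpow_of_nonneg (setIntegral_Ioc_nonneg hg0 0 t) hp0]
        gcongr
        exact hprimitive t
    _ ≤ ENNReal.ofReal ((p / δ) ^ p) *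
          ∫⁻ t in Ioi 0, ENNReal.ofReal (exp (-δ * t)) * ENNReal.ofReal (g t) ^ p :=
        lintegral_exp_mul_lintegral_Ioc_rpow_le hgm.ennreal_ofReal hp hδ
    _ = ENNReal.ofReal ((p / δ) ^ p) * ∫⁻ t in Ioi 0, ENNReal.ofReal (exp (-δ * t) * g t ^ p) := by
        simp only [ENNReal.ofReal_mul (exp_pos _).le, ENNReal.ofReal_rpow_of_nonneg (hg0 _) hp0]

theorem integrableOn_exp_mul_setIntegral_Ioc_rpow (hp : 1 < p) (hδ : 0 < δ) (hgm : Measurable g)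
    (hg0 : ∀ t, 0 ≤ g t) (hgp : IntegrableOn (fun t => exp (-δ * t) * g t ^ p) (Ioi 0)) :
    IntegrableOn (fun t => exp (-δ * t) * (∫ s in Ioc 0 t, g s) ^ p) (Ioi 0) := by
  refine ⟨(measurable_exp_mul_setIntegral_Ioc_rpow hgm).aestronglyMeasurable, ?_⟩
  rw [hasFiniteIntegral_iff_ofReal (.of_forall (exp_mul_setIntegral_Ioc_rpow_nonneg hg0))]
  exact (lintegral_exp_mul_setIntegral_Ioc_rpow_le hp hδ hgm hg0).trans_lt
    (ENNReal.mul_lt_top ENNReal.ofReal_lt_top hgp.lintegral_lt_top)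

theorem setIntegral_exp_mul_setIntegral_Ioc_rpow_le (hp : 1 < p) (hδ : 0 < δ) (hgm : Measurable g)
    (hg0 : ∀ t, 0 ≤ g t) (hgp : IntegrableOn (fun t => exp (-δ * t) * g t ^ p) (Ioi 0)) :
    ∫ t in Ioi 0, exp (-δ * t) * (∫ s in Ioc 0 t, g s) ^ p
      ≤ (p / δ) ^ p * ∫ t in Ioi 0, exp (-δ * t) * g t ^ p := by
  rw [integral_eq_lintegral_of_nonneg_ae (.of_forall (exp_mul_setIntegral_Ioc_rpow_nonneg hg0))
      (measurable_exp_mul_setIntegral_Ioc_rpow hgm).aestronglyMeasurable,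
    integral_eq_lintegral_of_nonneg_ae
      (.of_forall fun t => mul_nonneg (exp_pos _).le (rpow_nonneg (hg0 t) p)) hgp.1,
    ← ENNReal.toReal_ofReal (by positivity : 0 ≤ (p / δ) ^ p), ← ENNReal.toReal_mul]
  exact ENNReal.toReal_mono (ENNReal.mul_ne_top ENNReal.ofReal_ne_top hgp.lintegral_lt_top.ne)
    (lintegral_exp_mul_setIntegral_Ioc_rpow_le hp hδ hgm hg0)

end Poincare

theorem dist_rpow_le_two_rpow_mul {X : Type*} [PseudoMetricSpace X] {p : ℝ} (hp : 1 ≤ p)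
    (x y z : X) : dist x z ^ p ≤ 2 ^ (p - 1) * (dist x y ^ p + dist y z ^ p) := by
  refine (rpow_le_rpow dist_nonneg (dist_triangle x y z) (by linarith)).trans ?_
  exact_mod_cast NNReal.rpow_add_le_mul_rpow_add_rpow (nndist x y) (nndist y z) hp

theorem le_two_rpow_mul_rpow_add_of_dist_le {X : Type*} [PseudoMetricSpace X] {V : X → ℝ}
    {ϱ : X} {p α β : ℝ} (hp : 1 ≤ p) (hα : 0 ≤ α) (hV : ∀ x, V x ≤ α * dist x ϱ ^ p + β)
    {x y : X} {a : ℝ} (hxy : dist x y ≤ a) :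
    V x ≤ 2 ^ p * α * a ^ p + (β + 2 ^ p * α * dist y ϱ ^ p) := by
  calc V x ≤ α * dist x ϱ ^ p + β := hV x
    _ ≤ α * (2 ^ p * (a ^ p + dist y ϱ ^ p)) + β := by
        gcongr
        calc dist x ϱ ^ p ≤ 2 ^ (p - 1) * (dist x y ^ p + dist y ϱ ^ p) :=
              dist_rpow_le_two_rpow_mul hp x y ϱ
          _ ≤ 2 ^ p * (a ^ p + dist y ϱ ^ p) := by
              gcongr
              · exact one_le_two
              · linarith
    _ = 2 ^ p * α * a ^ p + (β + 2 ^ p * α * dist y ϱ ^ p) := by ring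

theorem le_setIntegral_exp_mul_sub_of_le {k u V : ℝ → ℝ} {δ a A c : ℝ} (hδ : 0 < δ)
    (hk : IntegrableOn (fun t => exp (-δ * t) * k t) (Ioi 0))
    (hu : IntegrableOn (fun t => exp (-δ * t) * u t) (Ioi 0))
    (hint : IntegrableOn (fun t => exp (-δ * t) * (a * k t - V t)) (Ioi 0))
    (hV : ∀ t, 0 < t → V t ≤ A * u t + c) :
    a * (∫ t in Ioi 0, exp (-δ * t) * k t) - A * (∫ t in Ioi 0, exp (-δ * t) * u t) - c / δ
      ≤ ∫ t in Ioi 0, exp (-δ * t) * (a * k t - V t) := by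
  have hexp := integral_exp_mul_Ioi (neg_lt_zero.2 hδ) 0
  have hexp_int := (integrableOn_exp_mul_Ioi (neg_lt_zero.2 hδ) 0).const_mul c
  simp only [mul_zero, exp_zero, neg_div_neg_eq] at hexp
  calc a * (∫ t in Ioi 0, exp (-δ * t) * k t) - A * (∫ t in Ioi 0, exp (-δ * t) * u t) - c / δ
      = ∫ t in Ioi 0, a * (exp (-δ * t) * k t) - A * (exp (-δ * t) * u t) - c * exp (-δ * t) := by
        rw [integral_sub ?_ hexp_int, integral_sub (hk.const_mul a) (hu.const_mul A),
          integral_const_mul, integral_const_mul, integral_const_mul, hexp, mul_one_div]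
        exact (hk.const_mul a).sub (hu.const_mul A)
    _ ≤ ∫ t in Ioi 0, exp (-δ * t) * (a * k t - V t) := by
        refine setIntegral_mono_on (((hk.const_mul a).sub (hu.const_mul A)).sub hexp_int) hint
          measurableSet_Ioi fun t ht => ?_
        have := mul_le_mul_of_nonneg_left (hV t ht) (exp_pos (-δ * t)).le
        linarith

theorem action_lower_bound_general {X : Type*} [MetricSpace X] (p δ α β : ℝ)
    (hp : 1 < p) (hδ : 0 < δ) (hα : 0 ≤ α)
    (hsmall : p * (2 * p / δ) ^ p * α < 1)
    (𝒱 : X → ℝ) (ϱ : X)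
    (hV : ∀ x, 𝒱 x ≤ α * dist x ϱ ^ p + β)
    (σ : ℝ → X) (g : ℝ → ℝ) (hgm : Measurable g) (hg0 : ∀ t, 0 ≤ g t)
    (hcurve : ∀ s t : ℝ, 0 ≤ s → s ≤ t → dist (σ s) (σ t) ≤ ∫ r in s..t, g r)
    (hgp : Integrable (fun t => Real.exp (-δ * t) * g t ^ p)
      (volume.restrict (Set.Ioi 0)))
    (hint : IntegrableOn
      (fun t => Real.exp (-δ * t) * ((1/p) * g t ^ p - 𝒱 (σ t))) (Set.Ioi 0)) :
    (∫ t in Set.Ioi (0:ℝ), Real.exp (-δ * t) * ((1/p) * g t ^ p - 𝒱 (σ t)))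
      ≥ -(1/δ) * (β + 2 ^ p * α * dist (σ 0) ϱ ^ p) := by
  have hp0 : 0 < p := by linarith
  have hpotential (t : ℝ) (ht : 0 < t) : 𝒱 (σ t)
      ≤ 2 ^ p * α * (∫ s in Ioc 0 t, g s) ^ p + (β + 2 ^ p * α * dist (σ 0) ϱ ^ p) := by
    refine le_two_rpow_mul_rpow_add_of_dist_le hp.le hα hV ?_
    rw [dist_comm]
    exact (hcurve 0 t le_rfl ht.le).trans_eq (intervalIntegral.integral_of_le ht.le)
  have hlower := le_setIntegral_exp_mul_sub_of_le hδ hgp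
    (integrableOn_exp_mul_setIntegral_Ioc_rpow hp hδ hgm hg0 hgp) hint hpotential
  have hpoincare := setIntegral_exp_mul_setIntegral_Ioc_rpow_le hp hδ hgm hg0 hgp
  have hkinetic : 0 ≤ ∫ t in Ioi 0, exp (-δ * t) * g t ^ p :=
    setIntegral_nonneg measurableSet_Ioi fun t _ =>
      mul_nonneg (exp_pos _).le (rpow_nonneg (hg0 t) p)
  have hcoef : 2 ^ p * α * (p / δ) ^ p ≤ 1 / p := by
    rw [mul_div_assoc, mul_rpow zero_le_two (by positivity)] at hsmall
    rw [le_div_iff₀ hp0]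
    linarith
  have h1 := mul_le_mul_of_nonneg_left hpoincare (by positivity : 0 ≤ 2 ^ p * α)
  have h2 := mul_le_mul_of_nonneg_right hcoef hkinetic
  rw [ge_iff_le, neg_mul, one_div_mul_eq_div]
  linarith

/-- Lower bound for discounted actions in a metric space: if `𝒱 x ≤ α d(x,ϱ)^p + β`
with `p (2p/δ)^p α < 1`, and `σ` is a curve with measurable speed `g` of finite
discounted kinetic energy, then
`∫_0^∞ e^{-δt}(g^p/p - 𝒱(σ)) dt ≥ -(1/δ)(β + 2^p α d(σ(0),ϱ)^p)`. -/
theorem action_lower_bound {X : Type*} [MetricSpace X] (p δ α β : ℝ)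
    (hp : 1 < p) (hδ : 0 < δ) (hα : 0 ≤ α)
    (hsmall : p * (2 * p / δ) ^ p * α < 1)
    (𝒱 : X → ℝ) (ϱ : X)
    (hV : ∀ x, 𝒱 x ≤ α * dist x ϱ ^ p + β)
    (σ : ℝ → X) (g : ℝ → ℝ) (hgm : Measurable g) (hg0 : ∀ t, 0 ≤ g t)
    (hgi : ∀ s t : ℝ, 0 ≤ s → s ≤ t → IntervalIntegrable g volume s t)
    (hcurve : ∀ s t : ℝ, 0 ≤ s → s ≤ t → dist (σ s) (σ t) ≤ ∫ r in s..t, g r)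
    (hgp : Integrable (fun t => Real.exp (-δ * t) * g t ^ p)
      (volume.restrict (Set.Ioi 0)))
    (hint : IntegrableOn
      (fun t => Real.exp (-δ * t) * ((1/p) * g t ^ p - 𝒱 (σ t))) (Set.Ioi 0)) :
    (∫ t in Set.Ioi (0:ℝ), Real.exp (-δ * t) * ((1/p) * g t ^ p - 𝒱 (σ t)))
      ≥ -(1/δ) * (β + 2 ^ p * α * dist (σ 0) ϱ ^ p) :=
  action_lower_bound_general p δ α β hp hδ hα hsmall 𝒱 ϱ hV σ g hgm hg0 hcurve hgp hint
end
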